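/- arXiv:1707.04448 — 5 statements merged into one kernel-verified Lean document; each statement's English description precedes it below -/
import Mathlib

section
/- The map α : k[[u,v]] → k((t))[[τ]] × k((s))[[τ]] defined by sending a formal power series Σ_{i,j≥0} a_{ij} u^i v^j to the pair ( Σ_{j≥0} ( Σ_{i≥0} a_{ij} t^{i−j} ) τ^j , Σ_{i≥0} ( Σ_{j≥0} a_{ij} s^{j−i} ) τ^i ) is a well-defined injective ring homomorphism (for each fixed j the inner sum Σ_i a_{ij} t^{i−j} is a Laurent series of order ≥ −j, and similarly for the second component). In particular α(u) = (t, s^{−1}τ), α(v) = (t^{−1}τ, s), and α(u·v) = (τ, τ). -/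
/-!
Splitting off the variable `u`, a series in `k[[u,v]]` becomes a series in `τ` with coefficients
in `k[[v]]`; the substitution `u ↦ s⁻¹τ`, `v ↦ s` is then the rescaling `τ ↦ s⁻¹τ` applied after
embedding `k[[s]]` into `k((s))`. Since `s⁻¹` is a unit, rescaling by it is invertible, so this
branch expansion is an injective ring homomorphism; the other branch is the same map precomposed
with the swap `u ↔ v`.
-/

open MvPowerSeries

lemma Finsupp.cons_single_zero {M : Type*} [AddCommMonoid M] (a b : M) :
    Finsupp.cons a (Finsupp.single (0 : Fin 1) b) = Finsupp.single 0 a + Finsupp.single 1 b := by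
  ext i
  refine Fin.cases ?_ (fun j => ?_) i
  · simp
  · rw [Subsingleton.elim j 0, Finsupp.cons_succ]
    simp

namespace PowerSeries

variable {A : Type*} [CommSemiring A]

theorem rescale_C (a r : A) : rescale a (C r) = C r := by
  ext n
  simp only [coeff_rescale, coeff_C]
  split_ifs with h <;> simp [h]

theorem rescale_injective_of_mul_eq_one {a b : A} (hab : a * b = 1) :
    Function.Injective (rescale a) :=
  Function.LeftInverse.injective (g := rescale b) fun f => by
    rw [rescale_rescale, hab, rescale_one, RingHom.id_apply]

end PowerSeries

namespace MvPowerSeries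

variable {R : Type*} [CommRing R]

theorem coeff_rename_swap (a : MvPowerSeries (Fin 2) R) (p q : ℕ) :
    coeff (Finsupp.single 0 p + Finsupp.single 1 q) (rename (Equiv.swap (0 : Fin 2) 1) a) =
      coeff (Finsupp.single 0 q + Finsupp.single 1 p) a := by
  have hswap : Finsupp.single (0 : Fin 2) p + Finsupp.single 1 q =
      (Finsupp.single (0 : Fin 2) q + Finsupp.single 1 p).embDomain
        (Equiv.swap (0 : Fin 2) 1).toEmbedding := by
    simp [Finsupp.embDomain_add, add_comm]
  rw [hswap]
  exact coeff_embDomain_rename _ a _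

variable (R) in
/-- The isomorphism `k[[u,v]] ≃ k[[v]][[u]]`, as a ring homomorphism. -/
noncomputable def splitFinTwo : MvPowerSeries (Fin 2) R →+* PowerSeries (PowerSeries R) :=
  (PowerSeries.map (rename (Equiv.ofUnique (Fin 1) Unit)).toRingHom).comp
    (finSuccEquiv R 1).toRingHom

theorem coeff_coeff_splitFinTwo (a : MvPowerSeries (Fin 2) R) (i n : ℕ) :
    PowerSeries.coeff n (PowerSeries.coeff i (splitFinTwo R a)) =
      coeff (Finsupp.single 0 i + Finsupp.single 1 n) a := by
  have hn : Finsupp.single () n =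
      (Finsupp.single 0 n).embDomain (Equiv.ofUnique (Fin 1) Unit).toEmbedding := by
    simp
  rw [splitFinTwo, RingHom.comp_apply, PowerSeries.coeff_map, PowerSeries.coeff, hn]
  refine (coeff_embDomain_rename (Equiv.ofUnique (Fin 1) Unit).toEmbedding _ _).trans ?_
  rw [RingEquiv.toRingHom_eq_coe, RingHom.coe_coe, AlgEquiv.coe_ringEquiv,
    coeff_coeff_finSuccEquiv, Finsupp.cons_single_zero]

theorem splitFinTwo_injective : Function.Injective (splitFinTwo R) :=
  (PowerSeries.map_injective _ (rename_injective (Equiv.ofUnique (Fin 1) Unit).toEmbedding)).comp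
    (finSuccEquiv R 1).injective

theorem splitFinTwo_X_zero : splitFinTwo R (X 0) = PowerSeries.X := by
  simp [splitFinTwo]

theorem splitFinTwo_X_one : splitFinTwo R (X 1) = PowerSeries.C PowerSeries.X := by
  have h1 : (X 1 : MvPowerSeries (Fin 2) R) = X (Fin.succ 0) := rfl
  rw [splitFinTwo, RingHom.comp_apply, h1, RingEquiv.toRingHom_eq_coe, RingHom.coe_coe,
    AlgEquiv.coe_ringEquiv, finSuccEquiv_X_succ, PowerSeries.map_C]
  simp [PowerSeries.X]

variable (R) in
/-- The expansion `k[[u,v]] → k((s))[[τ]]` along the branch `u = 0`: `u ↦ s⁻¹τ`, `v ↦ s`. -/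
noncomputable def branchExpansion : MvPowerSeries (Fin 2) R →+* PowerSeries (LaurentSeries R) :=
  ((PowerSeries.rescale (HahnSeries.single (-1 : ℤ) (1 : R))).comp
    (PowerSeries.map (HahnSeries.ofPowerSeries ℤ R))).comp (splitFinTwo R)

theorem coeff_coeff_branchExpansion (a : MvPowerSeries (Fin 2) R) (i : ℕ) (m : ℤ) :
    (PowerSeries.coeff i (branchExpansion R a)).coeff m =
      if 0 ≤ m + i then coeff (Finsupp.single 0 i + Finsupp.single 1 (m + i).toNat) a
      else 0 := by
  rw [branchExpansion, RingHom.comp_apply, RingHom.comp_apply, PowerSeries.coeff_rescale,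
    HahnSeries.single_pow, one_pow, HahnSeries.coeff_single_mul, one_mul, PowerSeries.coeff_map,
    PowerSeries.coeff_coe, smul_neg, nsmul_one, sub_neg_eq_add]
  split_ifs with hneg hnonneg hnonneg
  · omega
  · rfl
  · rw [← coeff_coeff_splitFinTwo, show (m + i).natAbs = (m + i).toNat by omega]
  · omega

theorem branchExpansion_injective : Function.Injective (branchExpansion R) := by
  have hunit : HahnSeries.single (-1 : ℤ) (1 : R) * HahnSeries.single 1 1 = 1 := by
    simp [HahnSeries.single_mul_single]
  exact (PowerSeries.rescale_injective_of_mul_eq_one hunit).comp <|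
    (PowerSeries.map_injective _ HahnSeries.ofPowerSeries_injective).comp splitFinTwo_injective

theorem branchExpansion_X_zero :
    branchExpansion R (X 0) = PowerSeries.monomial 1 (HahnSeries.single (-1 : ℤ) (1 : R)) := by
  rw [branchExpansion, RingHom.comp_apply, RingHom.comp_apply, splitFinTwo_X_zero,
    PowerSeries.map_X, PowerSeries.rescale_X, ← pow_one PowerSeries.X,
    ← PowerSeries.monomial_eq_C_mul_X_pow]

theorem branchExpansion_X_one :
    branchExpansion R (X 1) = PowerSeries.C (HahnSeries.single (1 : ℤ) (1 : R)) := by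
  rw [branchExpansion, RingHom.comp_apply, RingHom.comp_apply, splitFinTwo_X_one,
    PowerSeries.map_C, HahnSeries.ofPowerSeries_X, PowerSeries.rescale_C]

theorem branchExpansion_X_one_mul_X_zero :
    branchExpansion R (X 1 * X 0) = PowerSeries.monomial 1 1 := by
  rw [map_mul, branchExpansion_X_zero, branchExpansion_X_one,
    ← PowerSeries.monomial_zero_eq_C_apply, PowerSeries.monomial_mul_monomial,
    HahnSeries.single_mul_single]
  simp

end MvPowerSeries

theorem stmt0 (k : Type*) [CommRing k] :
    ∃ α : MvPowerSeries (Fin 2) k →+*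
        PowerSeries (LaurentSeries k) × PowerSeries (LaurentSeries k),
      Function.Injective α ∧
      -- first component: Σ_{j≥0} ( Σ_{i≥0} a_{ij} t^{i−j} ) τ^j
      (∀ (a : MvPowerSeries (Fin 2) k) (j : ℕ) (m : ℤ),
        (PowerSeries.coeff (R := LaurentSeries k) j ((α a).1)).coeff m =
          if 0 ≤ m + (j : ℤ) then
            MvPowerSeries.coeff (R := k)
              (Finsupp.single (0 : Fin 2) (m + (j : ℤ)).toNat + Finsupp.single (1 : Fin 2) j) a
          else 0) ∧
      -- second component: Σ_{i≥0} ( Σ_{j≥0} a_{ij} s^{j−i} ) τ^i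
      (∀ (a : MvPowerSeries (Fin 2) k) (i : ℕ) (m : ℤ),
        (PowerSeries.coeff (R := LaurentSeries k) i ((α a).2)).coeff m =
          if 0 ≤ m + (i : ℤ) then
            MvPowerSeries.coeff (R := k)
              (Finsupp.single (0 : Fin 2) i + Finsupp.single (1 : Fin 2) (m + (i : ℤ)).toNat) a
          else 0) ∧
      -- α(u) = (t, s⁻¹τ)
      α (MvPowerSeries.X 0) =
        (PowerSeries.C (R := LaurentSeries k) (HahnSeries.single (1 : ℤ) (1 : k)),
         PowerSeries.monomial (R := LaurentSeries k) 1 (HahnSeries.single (-1 : ℤ) (1 : k))) ∧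
      -- α(v) = (t⁻¹τ, s)
      α (MvPowerSeries.X 1) =
        (PowerSeries.monomial (R := LaurentSeries k) 1 (HahnSeries.single (-1 : ℤ) (1 : k)),
         PowerSeries.C (R := LaurentSeries k) (HahnSeries.single (1 : ℤ) (1 : k))) ∧
      -- α(u·v) = (τ, τ)
      α (MvPowerSeries.X 0 * MvPowerSeries.X 1) =
        (PowerSeries.monomial (R := LaurentSeries k) 1 (1 : LaurentSeries k),
         PowerSeries.monomial (R := LaurentSeries k) 1 (1 : LaurentSeries k)) := by
  let swap := (rename (Equiv.swap (0 : Fin 2) 1) : _ →ₐ[k] MvPowerSeries (Fin 2) k).toRingHom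
  have swap_X (i : Fin 2) : swap (X i) = X (Equiv.swap 0 1 i) := rename_X _ i
  refine ⟨((branchExpansion k).comp swap).prod (branchExpansion k),
    fun a b hab => branchExpansion_injective (congrArg Prod.snd hab),
    fun a j m => ?_, coeff_coeff_branchExpansion, ?_, ?_, ?_⟩
  · rw [RingHom.prod_apply, RingHom.comp_apply, coeff_coeff_branchExpansion]
    exact congrArg (ite _ · 0) (coeff_rename_swap a _ _)
  · simp [swap_X, branchExpansion_X_zero, branchExpansion_X_one]
  · simp [swap_X, branchExpansion_X_zero, branchExpansion_X_one]
  · rw [RingHom.prod_apply, RingHom.comp_apply, map_mul, swap_X, swap_X, mul_comm (X 0)]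
    simp [branchExpansion_X_one_mul_X_zero]
end

section
/- Let D : R → R be a k-derivation with D(t) ∈ tR. Then there exists a k-derivation D̃ : A → A extending D, i.e. such that D̃(ι(r)) = ι(D(r)) for all r ∈ R, where ι : R → A is the structure map; moreover D̃ can be chosen so that D̃(x̄) ∈ x̄·A and D̃(ȳ) ∈ ȳ·A, where x̄ and ȳ denote the classes of x and y in A. -/
noncomputable section

/-- The ideal `(xy − t)` of `R[[x,y]]`, where `R[[x,y]]` is formalized as
`MvPowerSeries (Fin 2) R` with `x` the variable `0` and `y` the variable `1`. -/
def nodeIdeal (R : Type*) [CommRing R] (t : R) : Ideal (MvPowerSeries (Fin 2) R) :=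
  Ideal.span
    {(MvPowerSeries.X 0 : MvPowerSeries (Fin 2) R) * MvPowerSeries.X 1 -
      (MvPowerSeries.C : R →+* MvPowerSeries (Fin 2) R) t}

/-- The complete local model `A = R[[x,y]]/(xy − t)` of a one-parameter smoothing
of a node. -/
abbrev NodeAlgebra (R : Type*) [CommRing R] (t : R) : Type _ :=
  MvPowerSeries (Fin 2) R ⧸ nodeIdeal R t

/-!
Write `D t = s t`. On `R[[x,y]]`, apply `D` to the coefficients and add `s x ∂/∂x`: the resulting
`k`-derivation sends `xy − t` to `s xy − D t = s (xy − t)`, so it preserves the ideal `(xy − t)`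
and descends to `A`, where it restricts to `D` on `R` and sends `x̄ ↦ s x̄`, `ȳ ↦ 0`.
-/

open MvPowerSeries

namespace Derivation

variable {k : Type*} [CommSemiring k]

section MapCoeffs

variable {R σ : Type*} [CommRing R] [Algebra k R]

def mvPowerSeriesMapCoeffs (D : Derivation k R R) :
    Derivation k (MvPowerSeries σ R) (MvPowerSeries σ R) :=
  let L : MvPowerSeries σ R →ₗ[k] MvPowerSeries σ R :=
    LinearMap.pi fun m => D.toLinearMap ∘ₗ LinearMap.proj m
  have coeff_L (f : MvPowerSeries σ R) (m : σ →₀ ℕ) : coeff m (L f) = D (coeff m f) := rfl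
  mk' L fun f g => by
    classical
    ext m
    rw [smul_eq_mul, smul_eq_mul, mul_comm g]
    simp only [map_add, coeff_mul, coeff_L, map_sum, leibniz, smul_eq_mul,
      ← Finset.sum_add_distrib]
    exact Finset.sum_congr rfl fun _ _ => by ring

@[simp]
theorem coeff_mvPowerSeriesMapCoeffs (D : Derivation k R R) (f : MvPowerSeries σ R)
    (m : σ →₀ ℕ) : coeff m (D.mvPowerSeriesMapCoeffs f) = D (coeff m f) :=
  rfl

@[simp]
theorem mvPowerSeriesMapCoeffs_C (D : Derivation k R R) (r : R) :
    D.mvPowerSeriesMapCoeffs (C r : MvPowerSeries σ R) = C (D r) := by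
  classical
  ext m
  simp only [coeff_mvPowerSeriesMapCoeffs, coeff_C, apply_ite D, map_zero]

@[simp]
theorem mvPowerSeriesMapCoeffs_X (D : Derivation k R R) (i : σ) :
    D.mvPowerSeriesMapCoeffs (X i : MvPowerSeries σ R) = 0 := by
  classical
  ext m
  simp only [coeff_mvPowerSeriesMapCoeffs, coeff_X, apply_ite D, map_one_eq_zero, map_zero,
    ite_self]

end MapCoeffs

section Quotient

variable {A : Type*} [CommRing A] [Algebra k A]

theorem mapsTo_span (d : Derivation k A A) {S : Set A}
    (hS : Set.MapsTo d S (Ideal.span S)) : Set.MapsTo d (Ideal.span S) (Ideal.span S) := by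
  intro a ha
  induction ha using Submodule.span_induction with
  | mem x hx => exact hS hx
  | zero => simp
  | add x y _ _ hx hy => simpa using add_mem hx hy
  | smul b x hx hdx =>
    rw [smul_eq_mul, leibniz, smul_eq_mul, smul_eq_mul]
    exact add_mem (Ideal.mul_mem_left _ b hdx) (Ideal.mul_mem_right _ _ hx)

def quotient (d : Derivation k A A) {I : Ideal A} (hI : Set.MapsTo d I I) :
    Derivation k (A ⧸ I) (A ⧸ I) :=
  liftOfSurjective (f := Ideal.Quotient.mkₐ k I) Ideal.Quotient.mk_surjective fun _ ha =>
    Ideal.Quotient.eq_zero_iff_mem.2 (hI (Ideal.Quotient.eq_zero_iff_mem.1 ha))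

@[simp]
theorem quotient_mk (d : Derivation k A A) {I : Ideal A} (hI : Set.MapsTo d I I) (a : A) :
    d.quotient hI (Ideal.Quotient.mk I a) = Ideal.Quotient.mk I (d a) := by
  unfold quotient
  exact liftOfSurjective_apply _ _ a

end Quotient

end Derivation

theorem stmt6_general (k R : Type*) [CommRing k] [CommRing R] [Algebra k R]
    (t : R)
    (D : Derivation k R R) (hD : D t ∈ Ideal.span ({t} : Set R)) :
    ∃ Dt : Derivation k (NodeAlgebra R t) (NodeAlgebra R t),
      (∀ r : R, Dt (algebraMap R (NodeAlgebra R t) r) = algebraMap R (NodeAlgebra R t) (D r)) ∧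
      Dt (Ideal.Quotient.mk (nodeIdeal R t) (MvPowerSeries.X 0)) ∈
        Ideal.span {Ideal.Quotient.mk (nodeIdeal R t) (MvPowerSeries.X 0)} ∧
      Dt (Ideal.Quotient.mk (nodeIdeal R t) (MvPowerSeries.X 1)) ∈
        Ideal.span {Ideal.Quotient.mk (nodeIdeal R t) (MvPowerSeries.X 1)} := by
  obtain ⟨s, hs⟩ := Ideal.mem_span_singleton'.mp hD
  let d : Derivation k (MvPowerSeries (Fin 2) R) (MvPowerSeries (Fin 2) R) :=
    D.mvPowerSeriesMapCoeffs +
      (C s * X 0 : MvPowerSeries (Fin 2) R) • (pderiv R 0).restrictScalars k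
  have hC (r : R) : d (C r) = C (D r) := by simp [d]
  have hX0 : d (X 0) = C s * X 0 := by simp [d]
  have hX1 : d (X 1) = 0 := by simp [d]
  have hI : Set.MapsTo d (nodeIdeal R t) (nodeIdeal R t) := by
    refine d.mapsTo_span (Set.mapsTo_singleton.2 (Ideal.mem_span_singleton'.2 ⟨C s, ?_⟩))
    rw [map_sub, Derivation.leibniz, hX0, hX1, hC, ← hs, map_mul, smul_zero, zero_add,
      smul_eq_mul]
    ring
  refine ⟨d.quotient hI, fun r => (d.quotient_mk hI (C r)).trans (congrArg _ (hC r)), ?_, ?_⟩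
  · rw [Derivation.quotient_mk, hX0, map_mul]
    exact Ideal.mul_mem_left _ _ (Ideal.mem_span_singleton_self _)
  · simp [hX1]

theorem stmt6 (k R : Type*) [CommRing k] [CommRing R] [Algebra k R]
    (h2 : IsUnit (2 : R)) (t : R)
    (D : Derivation k R R) (hD : D t ∈ Ideal.span ({t} : Set R)) :
    ∃ Dt : Derivation k (NodeAlgebra R t) (NodeAlgebra R t),
      (∀ r : R, Dt (algebraMap R (NodeAlgebra R t) r) = algebraMap R (NodeAlgebra R t) (D r)) ∧
      Dt (Ideal.Quotient.mk (nodeIdeal R t) (MvPowerSeries.X 0)) ∈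
        Ideal.span {Ideal.Quotient.mk (nodeIdeal R t) (MvPowerSeries.X 0)} ∧
      Dt (Ideal.Quotient.mk (nodeIdeal R t) (MvPowerSeries.X 1)) ∈
        Ideal.span {Ideal.Quotient.mk (nodeIdeal R t) (MvPowerSeries.X 1)} :=
  stmt6_general k R t D hD
end
end

section
/- Let A be a commutative k-algebra equipped with an action of Γ by k-algebra automorphisms, and let I ⊆ A be a Γ-stable ideal with I² = 0. Let B be a commutative A-algebra that is formally smooth over A and carries an action of Γ by k-algebra automorphisms making the structure map A → B Γ-equivariant. Then every Γ-equivariant A-algebra homomorphism φ₀ : B → A/I (where A/I carries the induced Γ-action and A-algebra structure) lifts to a Γ-equivariant A-algebra homomorphism φ : B → A with π ∘ φ = φ₀, where π : A → A/I is the projection. -/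
universe u

/-!
STATEMENT 8 (Appendix A of the paper, square-zero equivariant lifting).

Let `k` be a commutative ring and `Γ` a finite group whose order is invertible in `k`.
Let `A` be a commutative `k`-algebra with a `Γ`-action by `k`-algebra automorphisms
`ρA : Γ →* (A ≃ₐ[k] A)`, and let `I ⊆ A` be a `Γ`-stable ideal with `I² = 0`.
Let `B` be a commutative `A`-algebra, formally smooth over `A`, with a `Γ`-action
`ρB : Γ →* (B ≃ₐ[k] B)` making the structure map `A → B` equivariant.  Then every
`Γ`-equivariant `A`-algebra homomorphism `φ₀ : B → A/I` (where `A/I` carries the induced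
`Γ`-action) lifts to a `Γ`-equivariant `A`-algebra homomorphism `φ : B → A` with
`π ∘ φ = φ₀`.

Equivariance of `φ₀` is expressed via representatives: for every `γ`, `b` and every
representative `a` of `φ₀ b`, one has `φ₀ (ρB γ b) = mk (ρA γ a)`.
-/

theorem stmt8 (k Γ : Type*) [CommRing k] [Group Γ] [Fintype Γ]
    (hΓ : IsUnit ((Fintype.card Γ : k)))
    (A B : Type u) [CommRing A] [Algebra k A] [CommRing B] [Algebra k B]
    [Algebra A B] [IsScalarTower k A B] [Algebra.FormallySmooth A B]
    (I : Ideal A) (hI : I ^ 2 = ⊥)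
    (ρA : Γ →* (A ≃ₐ[k] A)) (ρB : Γ →* (B ≃ₐ[k] B))
    (hstable : ∀ γ : Γ, ∀ a ∈ I, ρA γ a ∈ I)
    (hcompat : ∀ (γ : Γ) (a : A), ρB γ (algebraMap A B a) = algebraMap A B (ρA γ a))
    (φ₀ : B →ₐ[A] A ⧸ I)
    (hφ₀ : ∀ (γ : Γ) (b : B) (a : A), φ₀ b = Ideal.Quotient.mk I a →
      φ₀ (ρB γ b) = Ideal.Quotient.mk I (ρA γ a)) :
    ∃ φ : B →ₐ[A] A,
      (∀ b : B, Ideal.Quotient.mk I (φ b) = φ₀ b) ∧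
      (∀ (γ : Γ) (b : B), φ (ρB γ b) = ρA γ (φ b)) := by

  classical
  obtain ⟨u, hu⟩ := hΓ
  set ε : k := ↑u⁻¹ with hεdef
  have hεn : ∀ x : A, ε • ((Fintype.card Γ : ℕ) • x) = x := by
    intro x
    rw [← Nat.cast_smul_eq_nsmul k, smul_smul]
    have h1 : ε * (Fintype.card Γ : k) = 1 := by rw [hεdef, ← hu]; exact u.inv_mul
    rw [h1, one_smul]
  have hIsq : ∀ x ∈ I, ∀ y ∈ I, x * y = 0 := by
    intro x hx y hy
    have : x * y ∈ I ^ 2 := by rw [sq]; exact Ideal.mul_mem_mul hx hy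
    rwa [hI, Ideal.mem_bot] at this
  have hInil : IsNilpotent I := ⟨2, hI⟩
  set ψ : B →ₐ[A] A := Algebra.FormallySmooth.lift I hInil φ₀ with hψdef
  have hmk : ∀ b : B, Ideal.Quotient.mk I (ψ b) = φ₀ b := fun b =>
    Algebra.FormallySmooth.mk_lift I hInil φ₀ b
  -- the conjugated lifts
  set g : Γ → B → A := fun σ b => ρA σ⁻¹ (ψ (ρB σ b)) with hgdef
  have hcancel : ∀ (σ : Γ) (x : A), ρA σ⁻¹ (ρA σ x) = x := by
    intro σ x
    have : (ρA σ⁻¹ * ρA σ) x = x := by rw [← map_mul, inv_mul_cancel, map_one]; rfl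
    exact this
  have hdI : ∀ (σ : Γ) (b : B), g σ b - ψ b ∈ I := by
    intro σ b
    have h1 : Ideal.Quotient.mk I (ψ (ρB σ b)) = Ideal.Quotient.mk I (ρA σ (ψ b)) := by
      rw [hmk]; exact hφ₀ σ b (ψ b) (hmk b).symm
    have h2 : ψ (ρB σ b) - ρA σ (ψ b) ∈ I := Ideal.Quotient.eq.mp h1
    have h3 := hstable σ⁻¹ _ h2
    rwa [map_sub, hcancel] at h3
  -- the difference δ and averaged lift
  set D : B → A := fun b => ε • ∑ σ : Γ, (g σ b - ψ b) with hDdef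
  have hDI : ∀ b : B, D b ∈ I := by
    intro b
    rw [hDdef]
    simp only
    rw [Algebra.smul_def]
    exact I.mul_mem_left _ (Ideal.sum_mem I fun σ _ => hdI σ b)
  have hDadd : ∀ b c : B, D (b + c) = D b + D c := by
    intro b c
    rw [hDdef]; simp only [hgdef, map_add, ← smul_add, ← Finset.sum_add_distrib]
    congr 1; apply Finset.sum_congr rfl; intro σ _; ring
  have hDmul : ∀ b c : B, D (b * c) = ψ b * D c + ψ c * D b := by
    intro b c
    have key : ∀ σ : Γ, g σ (b * c) - ψ (b * c) =
        ψ b * (g σ c - ψ c) + ψ c * (g σ b - ψ b) := by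
      intro σ
      have hmulg : g σ (b * c) = g σ b * g σ c := by
        rw [hgdef]; simp only [map_mul]
      have hz : (g σ b - ψ b) * (g σ c - ψ c) = 0 := hIsq _ (hdI σ b) _ (hdI σ c)
      rw [hmulg, map_mul]
      linear_combination hz
    rw [hDdef]
    simp only [key]
    rw [Finset.sum_add_distrib, smul_add, ← Finset.mul_sum, ← Finset.mul_sum,
      mul_smul_comm, mul_smul_comm]
  have hDalg : ∀ a : A, D (algebraMap A B a) = 0 := by
    intro a
    rw [hDdef]
    simp only [hgdef]
    have : ∀ σ : Γ, ρA σ⁻¹ (ψ (ρB σ (algebraMap A B a))) - ψ (algebraMap A B a) = 0 := by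
      intro σ
      rw [hcompat, ψ.commutes, ψ.commutes]
      simp only [Algebra.algebraMap_self, RingHom.id_apply]
      rw [hcancel, sub_self]
    simp only [this, Finset.sum_const_zero, smul_zero]
  have hDone : D 1 = 0 := by
    have := hDalg 1
    rwa [map_one] at this
  -- the lift
  set φ : B →ₐ[A] A :=
    { toFun := fun b => ψ b + D b
      map_one' := by show ψ 1 + D 1 = 1; rw [map_one, hDone, add_zero]
      map_mul' := by
        intro b c
        show ψ (b * c) + D (b * c) = (ψ b + D b) * (ψ c + D c)
        have hz : D b * D c = 0 := hIsq _ (hDI b) _ (hDI c)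
        rw [map_mul, hDmul]
        linear_combination -hz
      map_zero' := by
        show ψ 0 + D 0 = 0
        have h0 := hDalg 0
        rw [map_zero] at h0
        rw [map_zero, h0, add_zero]
      map_add' := by
        intro b c
        show ψ (b + c) + D (b + c) = (ψ b + D b) + (ψ c + D c)
        rw [map_add, hDadd]; ring
      commutes' := by
        intro a
        show ψ (algebraMap A B a) + D (algebraMap A B a) = algebraMap A A a
        rw [hDalg, add_zero, ψ.commutes]
    } with hφdef
  have hφapp : ∀ b : B, φ b = ψ b + D b := fun _ => rfl
  refine ⟨φ, ?_, ?_⟩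
  · intro b
    rw [hφapp, map_add, Ideal.Quotient.eq_zero_iff_mem.mpr (hDI b), add_zero, hmk]
  · intro γ b
    have hsum : ∀ b : B, ψ b + D b = ε • ∑ σ : Γ, g σ b := by
      intro b
      rw [hDdef]
      simp only
      rw [Finset.sum_sub_distrib, Finset.sum_const, Finset.card_univ, smul_sub,
        hεn (ψ b)]
      ring
    rw [hφapp, hφapp, hsum, hsum]
    have hstep : ∀ σ : Γ, g σ (ρB γ b) = ρA γ (g (σ * γ) b) := by
      intro σ
      rw [hgdef]
      simp only
      have h1 : ρB σ (ρB γ b) = ρB (σ * γ) b := by rw [map_mul]; rfl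
      have h2 : ∀ x : A, ρA γ (ρA (σ * γ)⁻¹ x) = ρA σ⁻¹ x := by
        intro x
        have : (ρA γ * ρA (σ * γ)⁻¹) x = ρA σ⁻¹ x := by
          rw [← map_mul]
          congr 1
          group
        exact this
      rw [h1, h2]
    calc ε • ∑ σ : Γ, g σ (ρB γ b) = ε • ∑ σ : Γ, ρA γ (g (σ * γ) b) := by
          simp only [hstep]
      _ = ε • ρA γ (∑ σ : Γ, g (σ * γ) b) := by rw [map_sum]
      _ = ρA γ (ε • ∑ σ : Γ, g (σ * γ) b) := by
          rw [map_smul]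
      _ = ρA γ (ε • ∑ σ : Γ, g σ b) := by
          congr 2
          exact Fintype.sum_equiv (Equiv.mulRight γ) _ _ (fun σ => rfl)
end

section
/- Let A be a commutative k-algebra equipped with an action of Γ by k-algebra automorphisms, and let I ⊆ A be a Γ-stable nilpotent ideal (Iⁿ = 0 for some n ≥ 1). Let B be a commutative A-algebra that is formally smooth over A and carries an action of Γ by k-algebra automorphisms making the structure map A → B Γ-equivariant. Then every Γ-equivariant A-algebra homomorphism φ₀ : B → A/I lifts to a Γ-equivariant A-algebra homomorphism φ : B → A with π ∘ φ = φ₀, where π : A → A/I is the projection. -/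
universe u

/-!
STATEMENT 9 (Appendix A of the paper, equivariant lifting along a nilpotent ideal).

Let `k` be a commutative ring and `Γ` a finite group whose order is invertible in `k`.
Let `A` be a commutative `k`-algebra with a `Γ`-action by `k`-algebra automorphisms
`ρA : Γ →* (A ≃ₐ[k] A)`, and let `I ⊆ A` be a `Γ`-stable nilpotent ideal (`Iⁿ = 0` for some `n ≥ 1`).
Let `B` be a commutative `A`-algebra, formally smooth over `A`, with a `Γ`-action
`ρB : Γ →* (B ≃ₐ[k] B)` making the structure map `A → B` equivariant.  Then every
`Γ`-equivariant `A`-algebra homomorphism `φ₀ : B → A/I` (where `A/I` carries the induced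
`Γ`-action) lifts to a `Γ`-equivariant `A`-algebra homomorphism `φ : B → A` with
`π ∘ φ = φ₀`.

Equivariance of `φ₀` is expressed via representatives: for every `γ`, `b` and every
representative `a` of `φ₀ b`, one has `φ₀ (ρB γ b) = mk (ρA γ a)`.
-/

/-- Auxiliary algebraic identity for the averaging argument: the `card`-weighted sum of the
pointwise products differs from the product of the sums by an element of `I ^ 2`, provided all
the `p γ` (resp. `q γ`) are congruent mod `I`. -/
lemma stmt9_avg_mem {Γ A : Type*} [Fintype Γ] [CommRing A] (I : Ideal A) (p q : Γ → A) (P Q : A)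
    (hp : ∀ γ, p γ - P ∈ I) (hq : ∀ γ, q γ - Q ∈ I) :
    (Fintype.card Γ : A) * (∑ γ, p γ * q γ) - (∑ γ, p γ) * (∑ γ, q γ) ∈ I ^ 2 := by
  have key : (Fintype.card Γ : A) * (∑ γ, p γ * q γ) - (∑ γ, p γ) * (∑ γ, q γ)
      = (Fintype.card Γ : A) * (∑ γ, (p γ - P) * (q γ - Q))
        - (∑ γ, (p γ - P)) * (∑ γ, (q γ - Q)) := by
    simp only [sub_mul, mul_sub, Finset.sum_sub_distrib, Finset.sum_const,
      Finset.card_univ, nsmul_eq_mul, ← Finset.sum_mul, ← Finset.mul_sum]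
    ring
  rw [key, sq]
  exact sub_mem
    (Ideal.mul_mem_left _ _ (Ideal.sum_mem _ fun γ _ => Ideal.mul_mem_mul (hp γ) (hq γ)))
    (Ideal.mul_mem_mul (Ideal.sum_mem _ fun γ _ => hp γ) (Ideal.sum_mem _ fun γ _ => hq γ))

/-- Base case: if `I = ⊥` the (unique) lift of `φ₀` is automatically equivariant. -/
lemma stmt9_base (k Γ : Type*) [CommRing k] [Group Γ] [Fintype Γ]
    (A B : Type u) [CommRing A] [Algebra k A] [CommRing B] [Algebra k B]
    [Algebra A B] [IsScalarTower k A B] [Algebra.FormallySmooth A B]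
    (I : Ideal A) (hI : I = ⊥)
    (ρA : Γ →* (A ≃ₐ[k] A)) (ρB : Γ →* (B ≃ₐ[k] B))
    (φ₀ : B →ₐ[A] A ⧸ I)
    (hφ₀ : ∀ (γ : Γ) (b : B) (a : A), φ₀ b = Ideal.Quotient.mk I a →
      φ₀ (ρB γ b) = Ideal.Quotient.mk I (ρA γ a)) :
    ∃ φ : B →ₐ[A] A,
      (∀ b : B, Ideal.Quotient.mk I (φ b) = φ₀ b) ∧
      (∀ (γ : Γ) (b : B), φ (ρB γ b) = ρA γ (φ b)) := by
  subst hI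
  have hnil : IsNilpotent (⊥ : Ideal A) := ⟨1, by simp⟩
  set ψ := Algebra.FormallySmooth.lift (R := A) (⊥ : Ideal A) hnil φ₀ with hψdef
  have hψ : ∀ b, Ideal.Quotient.mk (⊥ : Ideal A) (ψ b) = φ₀ b := fun b =>
    Algebra.FormallySmooth.mk_lift _ hnil φ₀ b
  have hinj : Function.Injective (Ideal.Quotient.mk (⊥ : Ideal A)) := by
    intro x y h
    have := Ideal.Quotient.eq.mp h
    simp [sub_eq_zero] at this; exact this
  exact ⟨ψ, hψ, fun γ b => hinj (by rw [hψ, hφ₀ γ b (ψ b) (hψ b).symm])⟩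

/-- The key averaging step: from an equivariant `φ₀ : B → A⧸I` produce an equivariant
`φ₁ : B → A⧸I²` compatible with `φ₀`. -/
lemma stmt9_step (k Γ : Type*) [CommRing k] [Group Γ] [Fintype Γ]
    (u' : k) (hu : (Fintype.card Γ : k) * u' = 1)
    (A B : Type u) [CommRing A] [Algebra k A] [CommRing B] [Algebra k B]
    [Algebra A B] [IsScalarTower k A B] [Algebra.FormallySmooth A B]
    (I : Ideal A) (hInil : IsNilpotent I)
    (ρA : Γ →* (A ≃ₐ[k] A)) (ρB : Γ →* (B ≃ₐ[k] B))
    (hstable : ∀ γ : Γ, ∀ a ∈ I, ρA γ a ∈ I)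
    (hcompat : ∀ (γ : Γ) (a : A), ρB γ (algebraMap A B a) = algebraMap A B (ρA γ a))
    (φ₀ : B →ₐ[A] A ⧸ I)
    (hφ₀ : ∀ (γ : Γ) (b : B) (a : A), φ₀ b = Ideal.Quotient.mk I a →
      φ₀ (ρB γ b) = Ideal.Quotient.mk I (ρA γ a)) :
    ∃ φ₁ : B →ₐ[A] A ⧸ (I ^ 2),
      (∀ (b : B) (a : A), φ₁ b = Ideal.Quotient.mk (I ^ 2) a → φ₀ b = Ideal.Quotient.mk I a) ∧
      (∀ (γ : Γ) (b : B) (a : A), φ₁ b = Ideal.Quotient.mk (I ^ 2) a →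
        φ₁ (ρB γ b) = Ideal.Quotient.mk (I ^ 2) (ρA γ a)) := by
  classical
  -- basic facts about the actions
  have hmulA : ∀ (g h : Γ) (x : A), ρA g (ρA h x) = ρA (g * h) x := fun g h x => by
    rw [map_mul]; rfl
  have hmulB : ∀ (g h : Γ) (x : B), ρB g (ρB h x) = ρB (g * h) x := fun g h x => by
    rw [map_mul]; rfl
  have hinvA : ∀ (g : Γ) (x : A), ρA g⁻¹ (ρA g x) = x := fun g x => by
    rw [hmulA, inv_mul_cancel, map_one]; rfl
  have hstable2 : ∀ γ : Γ, ∀ a ∈ I ^ 2, ρA γ a ∈ I ^ 2 := by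
    intro γ a ha
    rw [sq] at ha ⊢
    refine Submodule.mul_induction_on ha (fun m hm n hn => ?_) (fun x y hx hy => ?_)
    · rw [map_mul]; exact Ideal.mul_mem_mul (hstable γ m hm) (hstable γ n hn)
    · rw [map_add]; exact add_mem hx hy
  -- the invertible scalar
  set u : A := algebraMap k A u' with hudef
  have hcard : (Fintype.card Γ : A) * u = 1 := by
    have := congrArg (algebraMap k A) hu
    simpa [map_mul, map_natCast] using this
  -- the non-equivariant lift
  set ψ : B →ₐ[A] A := Algebra.FormallySmooth.lift (R := A) I hInil φ₀ with hψdef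
  have hψ : ∀ b, Ideal.Quotient.mk I (ψ b) = φ₀ b := fun b =>
    Algebra.FormallySmooth.mk_lift _ hInil φ₀ b
  -- the twisted lifts and their average (without the quotient)
  set p : B → Γ → A := fun b γ => ρA γ⁻¹ (ψ (ρB γ b)) with hpdef
  set T : B → A := fun b => ∑ γ : Γ, p b γ with hTdef
  have hpI : ∀ (γ : Γ) (b : B), p b γ - ψ b ∈ I := by
    intro γ b
    have h1 : φ₀ (ρB γ b) = Ideal.Quotient.mk I (ρA γ (ψ b)) := hφ₀ γ b (ψ b) (hψ b).symm
    have h2 : Ideal.Quotient.mk I (ψ (ρB γ b)) = Ideal.Quotient.mk I (ρA γ (ψ b)) := by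
      rw [hψ, h1]
    have h3 : ψ (ρB γ b) - ρA γ (ψ b) ∈ I := Ideal.Quotient.eq.mp h2
    have h4 := hstable γ⁻¹ _ h3
    rw [map_sub, hinvA] at h4
    exact h4
  have hpmul : ∀ (b b' : B) (γ : Γ), p (b * b') γ = p b γ * p b' γ := by
    intro b b' γ; simp [hpdef, map_mul]
  -- multiplicativity mod I²
  have hmul : ∀ b b' : B, u * T (b * b') - (u * T b) * (u * T b') ∈ I ^ 2 := by
    intro b b'
    have hT : T (b * b') = ∑ γ : Γ, p b γ * p b' γ := by
      simp only [hTdef]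
      exact Finset.sum_congr rfl fun γ _ => hpmul b b' γ
    have hkey := stmt9_avg_mem I (p b) (p b') (ψ b) (ψ b')
      (fun γ => hpI γ b) (fun γ => hpI γ b')
    have heq : u * T (b * b') - (u * T b) * (u * T b')
        = u * u * ((Fintype.card Γ : A) * (∑ γ : Γ, p b γ * p b' γ)
            - (∑ γ : Γ, p b γ) * (∑ γ : Γ, p b' γ)) := by
      rw [hT]
      simp only [hTdef]
      linear_combination (-(∑ γ : Γ, p b γ * p b' γ) * u) * hcard
    rw [heq]
    exact Ideal.mul_mem_left _ _ hkey
  -- the average is a lift of φ₀ (as elements of A, mod I)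
  have hTψ : ∀ b : B, u * T b - ψ b ∈ I := by
    intro b
    have h1 : T b - (Fintype.card Γ : A) * ψ b = ∑ γ : Γ, (p b γ - ψ b) := by
      rw [Finset.sum_sub_distrib, Finset.sum_const, Finset.card_univ, nsmul_eq_mul, hTdef]
    have h2 : T b - (Fintype.card Γ : A) * ψ b ∈ I := by
      rw [h1]; exact Ideal.sum_mem _ fun γ _ => hpI γ b
    have h3 : u * T b - ψ b = u * (T b - (Fintype.card Γ : A) * ψ b) := by
      linear_combination (ψ b) * hcard
    rw [h3]
    exact Ideal.mul_mem_left _ _ h2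
  -- the average as an A-algebra map to A⧸I²
  refine ⟨{ toFun := fun b => Ideal.Quotient.mk (I ^ 2) (u * T b)
            map_one' := ?_
            map_mul' := ?_
            map_zero' := ?_
            map_add' := ?_
            commutes' := ?_ }, ?_, ?_⟩
  · show Ideal.Quotient.mk (I ^ 2) (u * T 1) = 1
    have h1 : T 1 = (Fintype.card Γ : A) := by
      simp [hTdef, hpdef, map_one, Finset.sum_const, Finset.card_univ]
    rw [h1, mul_comm, hcard, map_one]
  · intro b b'
    exact (Ideal.Quotient.eq.mpr (hmul b b')).trans (map_mul _ _ _) |>.trans rfl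
  · simp [hTdef, hpdef, map_zero]
  · intro b b'
    show Ideal.Quotient.mk (I ^ 2) (u * T (b + b')) =
      Ideal.Quotient.mk (I ^ 2) (u * T b) + Ideal.Quotient.mk (I ^ 2) (u * T b')
    have : T (b + b') = T b + T b' := by
      simp [hTdef, hpdef, map_add, Finset.sum_add_distrib]
    rw [this, mul_add, map_add]
  · intro a
    have h1 : ∀ γ : Γ, p (algebraMap A B a) γ = a := by
      intro γ
      simp only [hpdef]
      rw [hcompat]
      have : ψ (algebraMap A B (ρA γ a)) = ρA γ a := by
        have := ψ.commutes (ρA γ a)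
        simpa using this
      rw [this, hinvA]
    have h2 : T (algebraMap A B a) = (Fintype.card Γ : A) * a := by
      simp only [hTdef]
      rw [Finset.sum_congr rfl fun γ _ => h1 γ, Finset.sum_const, Finset.card_univ,
        nsmul_eq_mul]
    have h3 : u * T (algebraMap A B a) = a := by
      rw [h2, ← mul_assoc, mul_comm u, hcard, one_mul]
    show Ideal.Quotient.mk (I ^ 2) (u * T (algebraMap A B a)) = algebraMap A (A ⧸ I ^ 2) a
    rw [h3, Ideal.Quotient.algebraMap_eq]
  -- compatibility with φ₀
  · intro b a h
    have h1 : u * T b - a ∈ I ^ 2 := Ideal.Quotient.eq.mp h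
    have h2 : u * T b - a ∈ I := Ideal.pow_le_self two_ne_zero h1
    have h3 : ψ b - a ∈ I := by
      have := sub_mem h2 (hTψ b)
      rwa [sub_sub_sub_cancel_left] at this
    rw [← hψ b]
    exact Ideal.Quotient.eq.mpr h3
  -- equivariance
  · intro γ b a h
    have hTe : T (ρB γ b) = ρA γ (T b) := by
      show ∑ δ : Γ, p (ρB γ b) δ = ρA γ (∑ δ : Γ, p b δ)
      rw [map_sum]
      refine (Fintype.sum_equiv (Equiv.mulRight γ⁻¹) _ _ ?_).symm
      intro δ
      show ρA γ (ρA δ⁻¹ (ψ (ρB δ b))) = ρA (δ * γ⁻¹)⁻¹ (ψ (ρB (δ * γ⁻¹) (ρB γ b)))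
      have e1 : δ * γ⁻¹ * γ = δ := by group
      have e2 : (δ * γ⁻¹)⁻¹ = γ * δ⁻¹ := by group
      rw [hmulB, hmulA, e1, e2, ← hmulA]
    show Ideal.Quotient.mk (I ^ 2) (u * T (ρB γ b)) = Ideal.Quotient.mk (I ^ 2) (ρA γ a)
    have h5 : u * T (ρB γ b) = ρA γ (u * T b) := by
      rw [hTe, map_mul]
      congr 1
      rw [hudef]
      exact ((ρA γ).commutes u').symm
    rw [h5]
    have h6 : u * T b - a ∈ I ^ 2 := Ideal.Quotient.eq.mp h
    have h7 : ρA γ (u * T b) - ρA γ a ∈ I ^ 2 := by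
      rw [← map_sub]; exact hstable2 γ _ h6
    exact Ideal.Quotient.eq.mpr h7

theorem stmt9 (k Γ : Type*) [CommRing k] [Group Γ] [Fintype Γ]
    (hΓ : IsUnit ((Fintype.card Γ : k)))
    (A B : Type u) [CommRing A] [Algebra k A] [CommRing B] [Algebra k B]
    [Algebra A B] [IsScalarTower k A B] [Algebra.FormallySmooth A B]
    (I : Ideal A) (n : ℕ) (hn : 1 ≤ n) (hI : I ^ n = ⊥)
    (ρA : Γ →* (A ≃ₐ[k] A)) (ρB : Γ →* (B ≃ₐ[k] B))
    (hstable : ∀ γ : Γ, ∀ a ∈ I, ρA γ a ∈ I)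
    (hcompat : ∀ (γ : Γ) (a : A), ρB γ (algebraMap A B a) = algebraMap A B (ρA γ a))
    (φ₀ : B →ₐ[A] A ⧸ I)
    (hφ₀ : ∀ (γ : Γ) (b : B) (a : A), φ₀ b = Ideal.Quotient.mk I a →
      φ₀ (ρB γ b) = Ideal.Quotient.mk I (ρA γ a)) :
    ∃ φ : B →ₐ[A] A,
      (∀ b : B, Ideal.Quotient.mk I (φ b) = φ₀ b) ∧
      (∀ (γ : Γ) (b : B), φ (ρB γ b) = ρA γ (φ b)) := by
  obtain ⟨u', hu⟩ : ∃ u' : k, (Fintype.card Γ : k) * u' = 1 := by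
    rcases hΓ with ⟨v, hv⟩
    exact ⟨↑v⁻¹, by rw [← hv]; exact v.mul_inv⟩
  clear hΓ
  induction n generalizing I hstable φ₀ hφ₀ with
  | zero => exact absurd hn (by omega)
  | succ n ih =>
    rcases Nat.eq_zero_or_pos n with rfl | hn1
    · rw [pow_one] at hI
      exact stmt9_base k Γ A B I hI ρA ρB φ₀ hφ₀
    · obtain ⟨φ₁, h5, h6⟩ :=
        stmt9_step k Γ u' hu A B I ⟨n + 1, hI⟩ ρA ρB hstable hcompat φ₀ hφ₀
      have hstable2 : ∀ γ : Γ, ∀ a ∈ I ^ 2, ρA γ a ∈ I ^ 2 := by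
        intro γ a ha
        rw [sq] at ha ⊢
        refine Submodule.mul_induction_on ha (fun m hm x hx => ?_) (fun x y hx hy => ?_)
        · rw [map_mul]; exact Ideal.mul_mem_mul (hstable γ m hm) (hstable γ x hx)
        · rw [map_add]; exact add_mem hx hy
      have hJ : (I ^ 2) ^ n = ⊥ := by
        rw [← pow_mul]
        refine le_bot_iff.mp ?_
        calc I ^ (2 * n) ≤ I ^ (n + 1) := Ideal.pow_le_pow_right (by omega)
          _ = ⊥ := hI
      obtain ⟨φ, hlift, hequiv⟩ := ih (I ^ 2) hn1 hJ hstable2 φ₁ h6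
      exact ⟨φ, fun b => (h5 b (φ b) (hlift b).symm).symm, hequiv⟩
end

section
/- Let A and F be Lie subalgebras of L and let e₁, …, e_n ∈ L be elements such that L = A + R·e₁ + ⋯ + R·e_n + F as an R-module (a sum of R-submodules). Then the universal enveloping algebra U(L) is spanned as an R-module by the products ι(a₁)⋯ι(a_r) · ι(e₁)^{N₁} ⋯ ι(e_n)^{N_n} · ι(f₁)⋯ι(f_s), where r, s ≥ 0, a₁,…,a_r ∈ A, f₁,…,f_s ∈ F, (N₁,…,N_n) ∈ ℕⁿ, and ι : L → U(L) is the canonical map. Equivalently, U(L) = Σ_{(N₁,…,N_n)∈ℕⁿ} U(A) ∘ ι(e₁)^{N₁} ∘ ⋯ ∘ ι(e_n)^{N_n} ∘ U(F), where U(A) and U(F) denote the images in U(L) of the enveloping algebras of A and F. -/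
/-!
Call a product `ι x₁ ⋯ ι x_m` ordered when each `xᵢ` is taken from one of the sets `X_{kᵢ}` of a
family spanning `L`, with `k₁ ≤ ⋯ ≤ k_m`. Multiplying an ordered product on the left by `ι x`,
`x ∈ X_k`, either keeps it ordered, or `ι x ι y = ι y ι x + ι ⁅x, y⁆` trades it for terms that are
shorter or start with the smaller key of `y`. Induction on the length, and within a length on the
key, shows that the ordered products form a left ideal containing `1`, hence span `U(L)`. Grouping
the factors by key gives `U(L) = U(X₀) ⋯ U(X_k)`, and the statement is the case
`X = (A, {e₁}, …, {eₙ}, F)`.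
-/

open UniversalEnvelopingAlgebra Submodule
open scoped Pointwise

theorem List.antitone_prod_drop {M : Type*} [Monoid M] [Preorder M] [MulRightMono M] {l : List M}
    (hl : ∀ a ∈ l, 1 ≤ a) : Antitone fun i => (l.drop i).prod := by
  refine antitone_nat_of_succ_le fun i => ?_
  rcases lt_or_ge i l.length with hi | hi
  · rw [List.drop_eq_getElem_cons hi, List.prod_cons]
    exact le_mul_of_one_le_left' (hl _ (List.getElem_mem hi))
  · simp [List.drop_of_length_le hi, List.drop_of_length_le (hi.trans (Nat.le_succ i))]

theorem Submodule.prod_map_span {R A : Type*} [CommSemiring R] [Semiring A] [Algebra R A]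
    (l : List (Set A)) : (l.map (span R)).prod = span R l.prod := by
  induction l with
  | nil => simp [one_eq_span, Set.singleton_one]
  | cons s l ih => rw [List.map_cons, List.prod_cons, List.prod_cons, ih, span_mul_span]

theorem Algebra.adjoin_image_le_span_prod_ofFn {R A B : Type*} [CommSemiring R] [Semiring A]
    [Algebra R A] (f : B → A) (s : Set B) :
    Subalgebra.toSubmodule (Algebra.adjoin R (f '' s)) ≤
      span R {u | ∃ (r : ℕ) (b : Fin r → B), (∀ i, b i ∈ s) ∧
        u = (List.ofFn fun i => f (b i)).prod} := by
  rw [Algebra.adjoin_eq_span]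
  refine span_mono fun u hu => ?_
  obtain ⟨l, hl, rfl⟩ := Submonoid.exists_list_of_mem_closure hu
  choose b hb hfb using fun i : Fin l.length => hl _ (List.getElem_mem i.2)
  exact ⟨l.length, b, hb, by simp only [hfb, List.ofFn_getElem]⟩

theorem Algebra.prod_ofFn_adjoin_singleton_le {R A : Type*} [CommSemiring R] [Semiring A]
    [Algebra R A] {n : ℕ} (g : Fin n → A) :
    (List.ofFn fun j => Subalgebra.toSubmodule (Algebra.adjoin R {g j})).prod ≤
      span R {u | ∃ N : Fin n → ℕ, u = (List.ofFn fun j => g j ^ N j).prod} := by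
  simp only [Algebra.adjoin_eq_span, ← Submonoid.powers_eq_closure]
  rw [← Function.comp_def (span R), ← List.map_ofFn, Submodule.prod_map_span]
  refine span_mono fun u hu => ?_
  obtain ⟨x, rfl⟩ := Set.mem_prod_list_ofFn.1 hu
  choose N hN using fun j => (x j).2
  exact ⟨N, by simp only [hN]⟩

namespace UniversalEnvelopingAlgebra

variable {R L : Type*} [CommRing R] [LieRing L] [LieAlgebra R L]

theorem adjoin_range_ι :
    Algebra.adjoin R (Set.range (ι R : L → UniversalEnvelopingAlgebra R L)) = ⊤ := by
  have : (ι R : L → UniversalEnvelopingAlgebra R L) = mkAlgHom R L ∘ TensorAlgebra.ι R := rfl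
  rw [this, Set.range_comp, ← AlgHom.map_adjoin, TensorAlgebra.adjoin_range_ι, Algebra.map_top,
    AlgHom.range_eq_top]
  exact RingCon.mkₐ_surjective _

theorem eq_top_of_ι_mul_mem {P : Submodule R (UniversalEnvelopingAlgebra R L)} (h1 : 1 ∈ P)
    (hι : ∀ x, ∀ u ∈ P, ι R x * u ∈ P) : P = ⊤ := by
  have hmul : ∀ a : UniversalEnvelopingAlgebra R L, ∀ u ∈ P, a * u ∈ P := by
    intro a
    have ha : a ∈ Algebra.adjoin R (Set.range (ι R : L → UniversalEnvelopingAlgebra R L)) := by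
      rw [adjoin_range_ι]; trivial
    induction ha using Algebra.adjoin_induction with
    | mem _ hx => obtain ⟨x, rfl⟩ := hx; exact hι x
    | algebraMap r => intro u hu; simpa [Algebra.smul_def] using P.smul_mem r hu
    | add a b _ _ ha hb => intro u hu; rw [add_mul]; exact add_mem (ha u hu) (hb u hu)
    | mul a b _ _ ha hb => intro u hu; rw [mul_assoc]; exact ha _ (hb u hu)
  exact eq_top_iff.2 fun a _ => by simpa using hmul a 1 h1

theorem ι_mul_ι_mul (x y : L) (w : UniversalEnvelopingAlgebra R L) :
    ι R x * (ι R y * w) = ι R y * (ι R x * w) + ι R ⁅x, y⁆ * w := by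
  let : LieRing (UniversalEnvelopingAlgebra R L) := LieRing.ofAssociativeRing
  rw [LieHom.map_lie, Ring.lie_def, sub_mul, mul_assoc, mul_assoc]
  abel

section OrderedMonomials

variable {κ : Type*}

variable (R) in
def ιProd (l : List (κ × L)) : UniversalEnvelopingAlgebra R L :=
  (l.map fun p => ι R p.2).prod

theorem ιProd_cons (p : κ × L) (l : List (κ × L)) :
    ιProd R (p :: l) = ι R p.2 * ιProd R l := rfl

variable [LinearOrder κ] (X : κ → Set L)

def IsOrderedMonomial (l : List (κ × L)) : Prop :=
  (∀ p ∈ l, p.2 ∈ X p.1) ∧ l.Pairwise fun p q => p.1 ≤ q.1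

variable (R) in
def orderedSpan (m : ℕ) : Submodule R (UniversalEnvelopingAlgebra R L) :=
  span R {u | ∃ l, IsOrderedMonomial X l ∧ l.length ≤ m ∧ ιProd R l = u}

variable {X}

theorem ιProd_mem_orderedSpan {l : List (κ × L)} (hl : IsOrderedMonomial X l) {m : ℕ}
    (hm : l.length ≤ m) : ιProd R l ∈ orderedSpan R X m :=
  subset_span ⟨l, hl, hm, rfl⟩

theorem orderedSpan_mono : Monotone (orderedSpan R X) := fun _ _ h =>
  span_mono fun _ ⟨l, hl, hm, hu⟩ => ⟨l, hl, hm.trans h, hu⟩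

theorem mul_mem_of_forall_ιProd_mul_mem {a : UniversalEnvelopingAlgebra R L}
    {T : Submodule R (UniversalEnvelopingAlgebra R L)} {m : ℕ}
    (h : ∀ l, IsOrderedMonomial X l → l.length ≤ m → a * ιProd R l ∈ T) {u}
    (hu : u ∈ orderedSpan R X m) : a * u ∈ T := by
  suffices orderedSpan R X m ≤ T.comap (LinearMap.mulLeft R a) from this hu
  exact span_le.2 fun _ ⟨l, hl, hm, hu⟩ => hu ▸ h l hl hm

theorem ι_mul_mem_orderedSpan_of_mem [WellFoundedLT κ] {m : ℕ}
    (ih : ∀ m' < m, ∀ (y : L), ∀ u ∈ orderedSpan R X m', ι R y * u ∈ orderedSpan R X (m' + 1))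
    (k : κ) : ∀ x ∈ X k, ∀ u ∈ orderedSpan R X m, ι R x * u ∈ orderedSpan R X (m + 1) := by
  induction k using WellFoundedLT.induction with
  | _ k ihk =>
  intro x hx u hu
  refine mul_mem_of_forall_ιProd_mul_mem (fun l hl hlen => ?_) hu
  obtain ⟨hmem, hsorted⟩ := hl
  rcases l with _ | ⟨⟨k', y⟩, l⟩
  · exact ιProd_mem_orderedSpan (l := [(k, x)]) (by simp [IsOrderedMonomial, hx]) (by simp)
  rw [List.pairwise_cons] at hsorted
  rcases le_or_gt k k' with hk | hk
  · have hord : IsOrderedMonomial X ((k, x) :: (k', y) :: l) := by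
      refine ⟨by simpa [hx] using hmem, List.pairwise_cons.2 ⟨?_, ?_⟩⟩
      · simpa [hk] using fun p hp => hk.trans (hsorted.1 p hp)
      · exact List.pairwise_cons.2 hsorted
    exact ιProd_mem_orderedSpan hord (by simpa using hlen)
  obtain ⟨m, rfl⟩ : ∃ m', m = m' + 1 := ⟨m - 1, by simp only [List.length_cons] at hlen; omega⟩
  have htail : ιProd R l ∈ orderedSpan R X m :=
    ιProd_mem_orderedSpan ⟨fun p hp => hmem p (List.mem_cons_of_mem _ hp), hsorted.2⟩
      (by simpa using hlen)
  rw [ιProd_cons, ι_mul_ι_mul]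
  exact add_mem (ihk k' hk y (hmem _ List.mem_cons_self) _ (ih m (by omega) x _ htail))
    (orderedSpan_mono (by omega) (ih m (by omega) _ _ htail))

theorem ι_mul_mem_orderedSpan [WellFoundedLT κ] (hX : span R (⋃ k, X k) = ⊤) (m : ℕ) (x : L) :
    ∀ u ∈ orderedSpan R X m, ι R x * u ∈ orderedSpan R X (m + 1) := by
  induction m using Nat.strong_induction_on generalizing x with
  | _ m ih =>
  have hx : x ∈ span R (⋃ k, X k) := hX ▸ mem_top
  induction hx using span_induction with
  | mem x hx =>
    obtain ⟨k, hk⟩ := Set.mem_iUnion.1 hx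
    exact ι_mul_mem_orderedSpan_of_mem ih k x hk
  | zero => simp
  | add x y _ _ hx hy => intro u hu; rw [map_add, add_mul]; exact add_mem (hx u hu) (hy u hu)
  | smul r x _ hx => intro u hu; rw [map_smul, smul_mul_assoc]; exact smul_mem _ r (hx u hu)

theorem iSup_orderedSpan_eq_top [WellFoundedLT κ] (hX : span R (⋃ k, X k) = ⊤) :
    ⨆ m, orderedSpan R X m = ⊤ := by
  refine eq_top_of_ι_mul_mem (mem_iSup_of_mem 0 (ιProd_mem_orderedSpan (l := []) ?_ le_rfl))
    fun x u hu => ?_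
  · simp [IsOrderedMonomial]
  obtain ⟨m, hm⟩ := (mem_iSup_of_directed _ orderedSpan_mono.directed_le).1 hu
  exact mem_iSup_of_mem (m + 1) (ι_mul_mem_orderedSpan hX m x u hm)

end OrderedMonomials

theorem ιProd_mem_prod_drop (Xs : List (Set L)) {l : List (Fin Xs.length × L)}
    (hl : IsOrderedMonomial (fun i => Xs[i]) l) {i : ℕ} (hi : ∀ p ∈ l, i ≤ p.1) :
    ιProd R l ∈
      ((Xs.map fun X => Subalgebra.toSubmodule (Algebra.adjoin R (ι R '' X))).drop i).prod := by
  set U := Xs.map fun X => Subalgebra.toSubmodule (Algebra.adjoin R (ι R '' X))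
  have hU : ∀ M ∈ U, 1 ≤ M := by
    simp only [U, List.mem_map]
    rintro _ ⟨X, -, rfl⟩
    exact one_le.2 (Subalgebra.one_mem _)
  induction l generalizing i with
  | nil => exact one_le.1 (List.one_le_prod_of_one_le fun M hM => hU M (List.mem_of_mem_drop hM))
  | cons p l ih =>
    obtain ⟨j, x⟩ := p
    obtain ⟨hmem, hsorted⟩ := hl
    rw [List.pairwise_cons] at hsorted
    have htail : ιProd R l ∈ (U.drop j).prod :=
      ih ⟨fun p hp => hmem p (List.mem_cons_of_mem _ hp), hsorted.2⟩ hsorted.1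
    have hx : ι R x ∈ Subalgebra.toSubmodule (Algebra.adjoin R (ι R '' Xs[j])) :=
      Algebra.subset_adjoin ⟨x, hmem _ List.mem_cons_self, rfl⟩
    have hdrop : U.drop j = Subalgebra.toSubmodule (Algebra.adjoin R (ι R '' Xs[j])) ::
        U.drop (j + 1) := by
      rw [List.drop_eq_getElem_cons (by simp [U]), List.getElem_map]; rfl
    refine List.antitone_prod_drop hU (hi _ List.mem_cons_self) ?_
    have := mul_mem_mul hx htail
    rwa [hdrop, List.prod_cons, ← mul_assoc, (Subalgebra.isIdempotentElem_toSubmodule _).eq,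
      ← List.prod_cons, ← hdrop] at this

theorem prod_adjoin_image_ι_eq_top (Xs : List (Set L)) (hXs : span R (⋃ X ∈ Xs, X) = ⊤) :
    (Xs.map fun X => Subalgebra.toSubmodule (Algebra.adjoin R (ι R '' X))).prod = ⊤ := by
  have hX : span R (⋃ i : Fin Xs.length, Xs[i]) = ⊤ := by
    refine eq_top_iff.2 (hXs ▸ span_mono (Set.iUnion₂_subset fun X hX => ?_))
    obtain ⟨i, hi, rfl⟩ := List.mem_iff_getElem.1 hX
    exact Set.subset_iUnion (fun i : Fin Xs.length => Xs[i]) ⟨i, hi⟩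
  rw [eq_top_iff, ← iSup_orderedSpan_eq_top (R := R) hX, iSup_le_iff]
  refine fun m => span_le.2 fun _ ⟨l, hl, _, hu⟩ => hu ▸ ?_
  simpa using ιProd_mem_prod_drop Xs hl (i := 0) (by simp)

end UniversalEnvelopingAlgebra

theorem stmt12 (R L : Type*) [CommRing R] [LieRing L] [LieAlgebra R L]
    (A F : LieSubalgebra R L) (n : ℕ) (e : Fin n → L)
    (h : (A : Submodule R L) ⊔ Submodule.span R (Set.range e) ⊔ (F : Submodule R L) = ⊤) :
    Submodule.span R
      { u : UniversalEnvelopingAlgebra R L |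
        ∃ (r s : ℕ) (a : Fin r → L) (f : Fin s → L) (N : Fin n → ℕ),
          (∀ i, a i ∈ A) ∧ (∀ j, f j ∈ F) ∧
          u = (List.ofFn fun i => UniversalEnvelopingAlgebra.ι R (a i)).prod *
              (List.ofFn fun j => (UniversalEnvelopingAlgebra.ι R (e j)) ^ (N j)).prod *
              (List.ofFn fun l => UniversalEnvelopingAlgebra.ι R (f l)).prod } = ⊤ := by
  set Xs : List (Set L) := (A : Set L) :: List.ofFn (fun j => ({e j} : Set L)) ++ [(F : Set L)]
  have hXs : span R (⋃ X ∈ Xs, X) = ⊤ := by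
    have hsub : ∀ X ∈ Xs, X ⊆ span R (⋃ X ∈ Xs, X) := fun X hX _ hx =>
      subset_span (Set.mem_biUnion hX hx)
    refine eq_top_iff.2 (h ▸ sup_le (sup_le (hsub A (by simp [Xs])) (span_le.2 ?_))
      (hsub F (by simp [Xs])))
    rintro _ ⟨j, rfl⟩
    exact hsub {e j} (by simp [Xs]) rfl
  have htop := prod_adjoin_image_ι_eq_top Xs hXs
  simp only [Xs, List.map_cons, List.map_append, List.map_ofFn, List.prod_cons, List.prod_append,
    List.map_nil, List.prod_nil, mul_one, Function.comp_def, Set.image_singleton] at htop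
  rw [eq_top_iff, ← htop]
  refine (mul_le_mul' (mul_le_mul' (Algebra.adjoin_image_le_span_prod_ofFn _ _)
    (Algebra.prod_ofFn_adjoin_singleton_le _))
    (Algebra.adjoin_image_le_span_prod_ofFn _ _)).trans ?_
  rw [span_mul_span, span_mul_span]
  refine span_mono ?_
  rintro _ ⟨_, ⟨_, ⟨r, a, ha, rfl⟩, _, ⟨N, rfl⟩, rfl⟩, _, ⟨s, f, hf, rfl⟩, rfl⟩
  exact ⟨r, s, a, f, N, ha, hf, rfl⟩
end
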